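/- Entanglement loss bound: for all η and all δ, E(0) - E(δ) ≥ (1/(2·ln 2))·sin²(2η)·sin²δ, where E(δ) = H((1+sqrt(cos²(2η)+sin²δ·sin²(2η)))/2). -/

import Mathlib

/-!
Measure entropy in nats via `Real.binEntropy` and put `H x = binEntropy ((1 + x) / 2)`.
The derivative of `H x + x ^ 2 / 2` is `x - artanh x ≤ 0` on `[0, 1)`, so this function is
antitone on `[0, 1]`. For `a = |cos 2η| ≤ b = √(cos² 2η + sin² δ sin² 2η) ≤ 1` this
gives `H a - H b ≥ (b ^ 2 - a ^ 2) / 2 = sin² 2η sin² δ / 2`; dividing by `log 2` converts to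
bits.
-/

open Real Set

noncomputable def binEnt (p : ℝ) : ℝ := -(p * Real.logb 2 p) - (1 - p) * Real.logb 2 (1 - p)

noncomputable def Eent (η δ : ℝ) : ℝ :=
  binEnt ((1 + Real.sqrt (Real.cos (2*η)^2 + Real.sin δ ^2 * Real.sin (2*η)^2)) / 2)

theorem Real.two_mul_le_log_one_add_sub_log_one_sub {x : ℝ} (hx₀ : 0 ≤ x) (hx₁ : x < 1) :
    2 * x ≤ log (1 + x) - log (1 - x) := by
  have hsum := hasSum_log_sub_log_of_abs_lt_one (abs_lt.2 ⟨by linarith, hx₁⟩)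
  simpa using le_hasSum hsum 0 fun k _ ↦ by positivity

theorem Real.antitoneOn_binEntropy_one_add_div_two_add_sq :
    AntitoneOn (fun x ↦ binEntropy ((1 + x) / 2) + x ^ 2 / 2) (Icc 0 1) := by
  refine antitoneOn_of_hasDerivWithinAt_nonpos (convex_Icc 0 1) (by fun_prop)
    (f' := fun x ↦ (log (1 - x) - log (1 + x)) / 2 + x) (fun x hx ↦ ?_) (fun x hx ↦ ?_)
  all_goals rw [interior_Icc] at hx; obtain ⟨hx₀, hx₁⟩ := hx
  · have hp₀ : (1 + x) / 2 ≠ 0 := by positivity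
    have hp₁ : (1 + x) / 2 ≠ 1 := by intro h; linarith
    have hent := (hasDerivAt_binEntropy hp₀ hp₁).comp x
      (((hasDerivAt_id x).const_add 1).div_const 2)
    refine ((hent.add ((hasDerivAt_pow 2 x).div_const 2)).congr_deriv ?_).hasDerivWithinAt
    rw [show 1 - (1 + x) / 2 = (1 - x) / 2 by ring, log_div (by linarith) two_ne_zero,
      log_div (by linarith) two_ne_zero]
    simp only [Nat.cast_ofNat, Nat.add_one_sub_one, pow_one]; ring
  · linarith [two_mul_le_log_one_add_sub_log_one_sub hx₀.le hx₁]

theorem Real.binEntropy_one_add_div_two_sub_le {a b : ℝ} (ha : 0 ≤ a) (hab : a ≤ b)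
    (hb : b ≤ 1) :
    (b ^ 2 - a ^ 2) / 2 ≤ binEntropy ((1 + a) / 2) - binEntropy ((1 + b) / 2) := by
  have hanti := antitoneOn_binEntropy_one_add_div_two_add_sq
    ⟨ha, hab.trans hb⟩ ⟨ha.trans hab, hb⟩ hab
  simp only at hanti
  linarith

theorem binEnt_eq_binEntropy_div_log_two (p : ℝ) : binEnt p = binEntropy p / log 2 := by
  simp only [binEnt, binEntropy, logb, log_inv]
  ring

theorem stmt_11 (η δ : ℝ) :
    Eent η 0 - Eent η δ ≥ Real.sin (2*η)^2 * Real.sin δ ^2 / (2 * Real.log 2) := by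
  set c := cos (2 * η) ^ 2
  set s := sin (2 * η) ^ 2
  set t := sin δ ^ 2
  have hcs : c + s = 1 := cos_sq_add_sin_sq _
  have hts : t * s ≤ s := mul_le_of_le_one_left (sq_nonneg _) (sin_sq_le_one δ)
  have hts₀ : 0 ≤ t * s := by positivity
  have key := binEntropy_one_add_div_two_sub_le (sqrt_nonneg c)
    (sqrt_le_sqrt (le_add_of_nonneg_right hts₀)) (sqrt_le_one.2 (by linarith))
  rw [sq_sqrt (by positivity), sq_sqrt (by positivity)] at key
  simp only [Eent, sin_zero, binEnt_eq_binEntropy_div_log_two]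
  calc s * t / (2 * log 2) = t * s / 2 / log 2 := by ring
    _ ≤ _ := by
      rw [← sub_div]
      gcongr
      simpa using key
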